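/- Let ε ∈ {−1, 1}, let x, N ∈ ℝ^{n+2} satisfy ⟨x,x⟩_p = 1, ⟨N,N⟩_p = ε, ⟨x,N⟩_p = 0, and let X, X', Z, Z' ∈ ℝ^{n+2} each be ⟨·,·⟩_p-orthogonal to both x and N, with the symmetry condition ⟨Z, X'⟩_p = ⟨X, Z'⟩_p. Let B be a Gram form on ⋀² ℝ^{n+2}. Then B(ε·(x ∧ X) − N ∧ Z, X' ∧ N + Z' ∧ x) = 0. In other words, writing T = X ∧ N + Z ∧ x and T' = X' ∧ N + Z' ∧ x for the images under the differential of the Gauss map of tangent vectors of a hypersurface (where Z = AX, Z' = AX' with A the self-adjoint shape operator, so that ⟨AX, X'⟩_p = ⟨X, AX'⟩_p), the symplectic form Ω(T, T') = ε G(𝕁T, T') vanishes: the Gauss map of a hypersurface in S^{n+1}_{p,1} is Lagrangian. -/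
import Mathlib


/-- The standard symmetric bilinear form of signature `(p, n+2-p)` on `ℝ^(n+2)`:
`⟨x,y⟩_p = -∑_{i<p} x_i y_i + ∑_{i≥p} x_i y_i`. -/
noncomputable def ip (n p : ℕ) (x y : Fin (n + 2) → ℝ) : ℝ :=
  ∑ i : Fin (n + 2), (if (i : ℕ) < p then -(x i * y i) else x i * y i)

/-- The wedge product `x ∧ y` as an element of the exterior square `⋀[ℝ]^2 ℝ^(n+2)`. -/
noncomputable def wedge (n : ℕ) (x y : Fin (n + 2) → ℝ) :
    ⋀[ℝ]^2 (Fin (n + 2) → ℝ) :=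
  ⟨ExteriorAlgebra.ιMulti ℝ 2 ![x, y],
    ExteriorAlgebra.ιMulti_range ℝ 2 (Set.mem_range_self _)⟩


/-- A Gram form on `⋀² ℝ^(n+2)`: a bilinear form `B` with
`B(x∧y, z∧w) = ⟨x,z⟩_p ⟨y,w⟩_p - ⟨x,w⟩_p ⟨z,y⟩_p`. -/
def IsGramForm (n p : ℕ)
    (B : (⋀[ℝ]^2 (Fin (n + 2) → ℝ)) →ₗ[ℝ] (⋀[ℝ]^2 (Fin (n + 2) → ℝ)) →ₗ[ℝ] ℝ) : Prop :=
  ∀ x y z w : Fin (n + 2) → ℝ,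
    B (wedge n x y) (wedge n z w) = ip n p x z * ip n p y w - ip n p x w * ip n p z y


lemma ip_comm (n p : ℕ) (x y : Fin (n + 2) → ℝ) : ip n p x y = ip n p y x := by
  unfold ip
  refine Finset.sum_congr rfl fun i _ => ?_
  split <;> ring

theorem stmt12 (n p : ℕ) (hp : p ≤ n + 2) (ε : ℝ) (hε : ε = 1 ∨ ε = -1)
    (x N : Fin (n + 2) → ℝ)
    (hx : ip n p x x = 1) (hN : ip n p N N = ε) (hxN : ip n p x N = 0)
    (X X' Z Z' : Fin (n + 2) → ℝ)
    (hXx : ip n p X x = 0) (hXN : ip n p X N = 0)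
    (hX'x : ip n p X' x = 0) (hX'N : ip n p X' N = 0)
    (hZx : ip n p Z x = 0) (hZN : ip n p Z N = 0)
    (hZ'x : ip n p Z' x = 0) (hZ'N : ip n p Z' N = 0)
    (hsym : ip n p Z X' = ip n p X Z')
    (B : (⋀[ℝ]^2 (Fin (n + 2) → ℝ)) →ₗ[ℝ] (⋀[ℝ]^2 (Fin (n + 2) → ℝ)) →ₗ[ℝ] ℝ)
    (hB : IsGramForm n p B) :
    B (ε • wedge n x X - wedge n N Z) (wedge n X' N + wedge n Z' x) = 0 := by
  have h1 := hB x X X' N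
  have h2 := hB x X Z' x
  have h3 := hB N Z X' N
  have h4 := hB N Z Z' x
  simp only [map_add, map_sub, map_smul, LinearMap.add_apply, LinearMap.sub_apply,
    LinearMap.smul_apply, smul_eq_mul] at *
  rw [h1, h2, h3, h4]
  rw [ip_comm n p x X', ip_comm n p x Z', ip_comm n p N X', ip_comm n p N Z',
    ip_comm n p N x, ip_comm n p Z' X, ip_comm n p X' Z]
  rw [hX'x, hXN, hxN, hX'N, hZN, hx, hN, hZ'N, hZx, hZ'x, hsym]
  ring
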